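/- The vector field (1/ν)·X, where X is the Lotka–Volterra vector field X = (x₁(x₂+x₃), x₂(−x₁+x₃), x₃(−x₁−x₂)) and ν = −x₁²x₃²/(x₁+x₂+x₃), is divergence-free on the open set where x₁x₃ ≠ 0 and x₁+x₂+x₃ ≠ 0. -/

import Mathlib

/-!
Since `div (g • X) = g div X + X g`, the field `ν⁻¹ • X` is divergence-free wherever `ν ≠ 0` and
`X ν = ν div X`, i.e. wherever `ν` is an inverse Jacobi multiplier of `X`. For the Lotka–Volterra
field `ν = -q / s` with `q = x₀² x₂²` and `s = x₀ + x₁ + x₂`: the components of `X` sum to zero,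
so `s` is a first integral, and `X q = 2 q (X₀ / x₀ + X₂ / x₂) = 2 q (x₂ - x₀) = q div X`.
-/

/-- The `i`-th partial derivative of `f : (Fin n → ℝ) → ℝ`. -/
noncomputable def pd {n : ℕ} (i : Fin n) (f : (Fin n → ℝ) → ℝ) (x : Fin n → ℝ) : ℝ :=
  fderiv ℝ f x (Pi.single i 1)

/-- Divergence of a vector field on `ℝⁿ` w.r.t. Lebesgue measure. -/
noncomputable def div' {n : ℕ} (X : (Fin n → ℝ) → (Fin n → ℝ)) (x : Fin n → ℝ) : ℝ :=
  ∑ i, pd i (fun y => X y i) x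

section Calculus

variable {𝕜 E : Type*} [NontriviallyNormedField 𝕜] [NormedAddCommGroup E] [NormedSpace 𝕜 E]
  {f g : E → 𝕜} {x : E}

theorem fderiv_fun_inv_apply (hf : DifferentiableAt 𝕜 f x) (hx : f x ≠ 0) (v : E) :
    fderiv 𝕜 (fun y => (f y)⁻¹) x v = -fderiv 𝕜 f x v / f x ^ 2 := by
  have h := (hasFDerivAt_inv hx).comp x hf.hasFDerivAt
  rw [Function.comp_def] at h
  rw [h.fderiv]
  simp [div_eq_mul_inv]

theorem fderiv_fun_div_apply (hf : DifferentiableAt 𝕜 f x) (hg : DifferentiableAt 𝕜 g x)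
    (hx : g x ≠ 0) (v : E) :
    fderiv 𝕜 (fun y => f y / g y) x v =
      (fderiv 𝕜 f x v * g x - f x * fderiv 𝕜 g x v) / g x ^ 2 := by
  simp only [div_eq_mul_inv]
  rw [fderiv_fun_mul hf (hg.fun_inv hx)]
  simp only [add_apply, smul_apply, smul_eq_mul, fderiv_fun_inv_apply hg hx, div_eq_mul_inv]
  field_simp
  ring

theorem fderiv_pi_eval_apply {ι : Type*} [Fintype ι] (i : ι) (x v : ι → 𝕜) :
    fderiv 𝕜 (fun y : ι → 𝕜 => y i) x v = v i := by
  rw [(hasFDerivAt_apply i x).fderiv, ContinuousLinearMap.proj_apply]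

end Calculus

section Divergence

variable {n : ℕ}

theorem sum_mul_pd_eq_fderiv (f : (Fin n → ℝ) → ℝ) (x v : Fin n → ℝ) :
    ∑ i, v i * pd i f x = fderiv ℝ f x v := by
  conv_rhs => rw [← Finset.univ_sum_single v, map_sum]
  refine Finset.sum_congr rfl fun i _ => ?_
  rw [pd, ← smul_eq_mul, ← map_smul, ← Pi.single_smul', smul_eq_mul, mul_one]

theorem div'_smul {g : (Fin n → ℝ) → ℝ} {X : (Fin n → ℝ) → Fin n → ℝ} {x : Fin n → ℝ}
    (hg : DifferentiableAt ℝ g x) (hX : ∀ i, DifferentiableAt ℝ (fun y => X y i) x) :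
    div' (fun y => g y • X y) x = g x * div' X x + fderiv ℝ g x (X x) := by
  rw [← sum_mul_pd_eq_fderiv, div', div', Finset.mul_sum, ← Finset.sum_add_distrib]
  refine Finset.sum_congr rfl fun i _ => ?_
  simp only [pd, Pi.smul_apply, smul_eq_mul]
  rw [fderiv_fun_mul hg (hX i)]
  simp only [add_apply, smul_apply, smul_eq_mul]

def IsInverseJacobiMultiplierAt (ν : (Fin n → ℝ) → ℝ) (X : (Fin n → ℝ) → Fin n → ℝ)
    (x : Fin n → ℝ) : Prop :=
  fderiv ℝ ν x (X x) = ν x * div' X x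

theorem IsInverseJacobiMultiplierAt.div'_inv_smul_eq_zero {ν : (Fin n → ℝ) → ℝ}
    {X : (Fin n → ℝ) → Fin n → ℝ} {x : Fin n → ℝ} (h : IsInverseJacobiMultiplierAt ν X x)
    (hν : DifferentiableAt ℝ ν x) (hνx : ν x ≠ 0)
    (hX : ∀ i, DifferentiableAt ℝ (fun y => X y i) x) :
    div' (fun y => (ν y)⁻¹ • X y) x = 0 := by
  rw [div'_smul (hν.fun_inv hνx) hX, fderiv_fun_inv_apply hν hνx, h]
  field_simp
  ring

end Divergence

section LotkaVolterra

def lotkaVolterra (y : Fin 3 → ℝ) : Fin 3 → ℝ :=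
  ![y 0 * (y 1 + y 2), y 1 * (-(y 0) + y 2), y 2 * (-(y 0) - y 1)]

variable (x : Fin 3 → ℝ)

theorem differentiableAt_lotkaVolterra_apply (i : Fin 3) :
    DifferentiableAt ℝ (fun y => lotkaVolterra y i) x := by
  fin_cases i <;>
    simp only [lotkaVolterra, Fin.zero_eta, Fin.mk_one, Fin.reduceFinMk, Matrix.cons_val_zero,
      Matrix.cons_val_one, Matrix.cons_val] <;>
    fun_prop

theorem div'_lotkaVolterra : div' lotkaVolterra x = 2 * (x 2 - x 0) := by
  simp only [div', pd, Fin.sum_univ_three, lotkaVolterra, Matrix.cons_val_zero,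
    Matrix.cons_val_one, Matrix.cons_val_two, Matrix.head_cons, Matrix.tail_cons]
  simp (disch := fun_prop) only [fderiv_fun_mul, fderiv_fun_add, fderiv_fun_neg, fderiv_fun_sub]
  simp only [smul_add, add_apply, smul_apply, fderiv_pi_eval_apply, Pi.single_eq_same,
    ne_eq, one_ne_zero, zero_ne_one, not_false_eq_true, Pi.single_eq_of_ne, Fin.reduceEq,
    smul_eq_mul, mul_zero, mul_one, add_zero, zero_add, smul_neg, neg_apply, neg_zero,
    sub_apply, sub_self]
  ring

theorem fderiv_sum_lotkaVolterra :
    fderiv ℝ (fun y : Fin 3 → ℝ => y 0 + y 1 + y 2) x (lotkaVolterra x) = 0 := by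
  rw [fderiv_fun_add (by fun_prop) (by fun_prop), fderiv_fun_add (by fun_prop) (by fun_prop)]
  simp only [lotkaVolterra, add_apply, fderiv_pi_eval_apply, Matrix.cons_val_zero,
    Matrix.cons_val_one, Matrix.cons_val]
  ring

theorem fderiv_sq_mul_sq_lotkaVolterra :
    fderiv ℝ (fun y : Fin 3 → ℝ => y 0 ^ 2 * y 2 ^ 2) x (lotkaVolterra x) =
      x 0 ^ 2 * x 2 ^ 2 * div' lotkaVolterra x := by
  rw [fderiv_fun_mul (by fun_prop) (by fun_prop), fderiv_fun_pow _ (by fun_prop),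
    fderiv_fun_pow _ (by fun_prop), div'_lotkaVolterra]
  simp only [lotkaVolterra, add_apply, smul_apply, fderiv_pi_eval_apply, Matrix.cons_val,
    Matrix.cons_val_zero, smul_eq_mul, nsmul_eq_mul]
  ring

variable {x}

theorem isInverseJacobiMultiplierAt_lotkaVolterra (hs : x 0 + x 1 + x 2 ≠ 0) :
    IsInverseJacobiMultiplierAt (fun y => -(y 0 ^ 2 * y 2 ^ 2) / (y 0 + y 1 + y 2))
      lotkaVolterra x := by
  rw [IsInverseJacobiMultiplierAt,
    fderiv_fun_div_apply (g := fun y : Fin 3 → ℝ => y 0 + y 1 + y 2) (by fun_prop) (by fun_prop)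
      hs,
    fderiv_fun_neg, neg_apply, fderiv_sq_mul_sq_lotkaVolterra, fderiv_sum_lotkaVolterra]
  field_simp
  ring

end LotkaVolterra

theorem lotka_volterra_rescaled_div_free (ν : (Fin 3 → ℝ) → ℝ)
    (hν : ∀ x, ν x = -(x 0 ^ 2 * x 2 ^ 2) / (x 0 + x 1 + x 2)) :
    ∀ x : Fin 3 → ℝ, x 0 * x 2 ≠ 0 → x 0 + x 1 + x 2 ≠ 0 →
      div' (fun y : Fin 3 → ℝ => (ν y)⁻¹ •
        ![y 0 * (y 1 + y 2), y 1 * (-(y 0) + y 2), y 2 * (-(y 0) - y 1)]) x = 0 := by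
  intro x hx hs
  obtain rfl : ν = fun y => -(y 0 ^ 2 * y 2 ^ 2) / (y 0 + y 1 + y 2) := funext hν
  have hq : x 0 ^ 2 * x 2 ^ 2 ≠ 0 := by rw [← mul_pow]; exact pow_ne_zero 2 hx
  exact (isInverseJacobiMultiplierAt_lotkaVolterra hs).div'_inv_smul_eq_zero
    (by fun_prop (disch := exact hs)) (div_ne_zero (neg_ne_zero.2 hq) hs)
    (differentiableAt_lotkaVolterra_apply x)
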